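/- Suppose Θ = Ad u is an automorphism of M_n(ℂ) (u unitary) and Θ = Ad a ∘ Φ + Ad b ∘ Ψ where {a,b} is a finite operational partition of unity and Φ, Ψ are unital completely positive maps on M_n(ℂ). Then there exist unitaries u_a, u_b in M_n(ℂ) and λ ∈ (0,1) such that a = √λ u_a, b = √(1−λ) u_b, Φ = Ad(u_a* u), and Ψ = Ad(u_b* u). -/

import Mathlib

open Matrix ComplexOrder

/-- The algebra of `n × n` complex matrices. -/
abbrev Mat (n : ℕ) := Matrix (Fin n) (Fin n) ℂ

/-- The map `Ad v : x ↦ v x v*` as a linear map. -/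
noncomputable def adL {n : ℕ} (v : Mat n) : Mat n →ₗ[ℂ] Mat n where
  toFun x := v * x * star v
  map_add' x y := by simp [Matrix.mul_add, Matrix.add_mul]
  map_smul' c x := by simp [Matrix.mul_smul, Matrix.smul_mul]

/-- A positive map sends positive semidefinite matrices to positive semidefinite matrices. -/
def IsPosMap (n : ℕ) (Φ : Mat n →ₗ[ℂ] Mat n) : Prop :=
  ∀ A : Mat n, A.PosSemidef → (Φ A).PosSemidef

/-- `Φ` is completely positive: `Φ ⊗ id_k` is positive for every `k`, where a block matrix
in `M_n ⊗ M_k` is applied `Φ` blockwise. -/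
def IsCompletelyPositive (n : ℕ) (Φ : Mat n →ₗ[ℂ] Mat n) : Prop :=
  ∀ k : ℕ, ∀ A : Matrix (Fin n × Fin k) (Fin n × Fin k) ℂ, A.PosSemidef →
    (Matrix.of fun p q : Fin n × Fin k =>
      (Φ (Matrix.of fun i j => A (i, p.2) (j, q.2))) p.1 q.1).PosSemidef

/-- Unital completely positive map. -/
def IsUCP (n : ℕ) (Φ : Mat n →ₗ[ℂ] Mat n) : Prop :=
  Φ 1 = 1 ∧ IsCompletelyPositive n Φ

/-- A finite operational partition of unity: nonzero matrices with `∑ vᵢ vᵢ* = 1`. -/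
def IsFOP {n m : ℕ} (v : Fin m → Mat n) : Prop :=
  (∀ i, v i ≠ 0) ∧ ∑ i, v i * star (v i) = 1

/-!
Conjugating by `u*`, the maps `Ad(u* a) ∘ Φ` and `Ad(u* b) ∘ Ψ` are completely positive and sum to
the identity. The Choi matrix of the identity is the rank-one projector onto the maximally
entangled vector, and a positive matrix dominated by a rank-one one is a multiple of it; so
`Ad(u* a) ∘ Φ = μ • id` and `Ad(u* b) ∘ Ψ = (1 - μ) • id`. Evaluating at `1` gives `a a* = μ` and
`b b* = 1 - μ`, hence `a`, `b` are positive multiples of unitaries (positive because `a, b ≠ 0`),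
and cancelling the scalar identifies `Φ` and `Ψ` as inner automorphisms.
-/

namespace Matrix

variable {𝕜 N : Type*} [RCLike 𝕜] [Fintype N] {C : Matrix N N 𝕜} {v : N → 𝕜}

theorem star_dotProduct_sub_div_smul_eq_zero (v x : N → 𝕜) :
    star v ⬝ᵥ (x - ((star v ⬝ᵥ x) / (star v ⬝ᵥ v)) • v) = 0 := by
  rw [dotProduct_sub, dotProduct_smul, smul_eq_mul, div_mul_cancel_of_imp, sub_self]
  intro hv
  simp [dotProduct_star_self_eq_zero.mp hv]

theorem PosSemidef.mulVec_eq_zero_of_le_vecMulVec (hC : C.PosSemidef)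
    (hD : (vecMulVec v (star v) - C).PosSemidef) {x : N → 𝕜} (hx : star v ⬝ᵥ x = 0) :
    C *ᵥ x = 0 := by
  rw [← hC.dotProduct_mulVec_zero_iff]
  have hle := hD.dotProduct_mulVec_nonneg x
  rw [sub_mulVec, dotProduct_sub, vecMulVec_mulVec, hx] at hle
  simp only [MulOpposite.op_zero, zero_smul, dotProduct_zero, zero_sub, neg_nonneg] at hle
  exact le_antisymm hle (hC.dotProduct_mulVec_nonneg x)

theorem IsHermitian.mulVec_self_eq_smul (hC : C.IsHermitian)
    (hker : ∀ x, star v ⬝ᵥ x = 0 → C *ᵥ x = 0) :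
    C *ᵥ v = ((star v ⬝ᵥ C *ᵥ v) / (star v ⬝ᵥ v)) • v := by
  set x₀ := C *ᵥ v - ((star v ⬝ᵥ C *ᵥ v) / (star v ⬝ᵥ v)) • v
  have hv₀ : star v ⬝ᵥ x₀ = 0 := star_dotProduct_sub_div_smul_eq_zero v _
  have hx₀ : star x₀ ⬝ᵥ x₀ = 0 := by
    have hCv : star x₀ ⬝ᵥ C *ᵥ v = 0 := by
      rw [dotProduct_mulVec, ← hC.eq, ← star_mulVec, hker x₀ hv₀, star_zero, zero_dotProduct]
    have hv : star x₀ ⬝ᵥ v = 0 := by rw [star_dotProduct, hv₀, star_zero]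
    simp only [x₀, dotProduct_sub, dotProduct_smul, hCv, hv, smul_zero, sub_zero]
  exact sub_eq_zero.mp (dotProduct_star_self_eq_zero.mp hx₀)

theorem IsHermitian.eq_smul_vecMulVec (hC : C.IsHermitian)
    (hker : ∀ x, star v ⬝ᵥ x = 0 → C *ᵥ x = 0) :
    C = ((star v ⬝ᵥ C *ᵥ v) / (star v ⬝ᵥ v) ^ 2) • vecMulVec v (star v) := by
  refine ext_iff_mulVec.mpr fun x => ?_
  have hx := hker _ (star_dotProduct_sub_div_smul_eq_zero v x)
  rw [mulVec_sub, mulVec_smul, hC.mulVec_self_eq_smul hker, sub_eq_zero] at hx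
  rw [hx, smul_mulVec, vecMulVec_mulVec, op_smul_eq_smul, smul_smul, smul_smul]
  ring_nf

theorem PosSemidef.exists_eq_smul_vecMulVec_of_le (hC : C.PosSemidef)
    (hD : (vecMulVec v (star v) - C).PosSemidef) : ∃ μ : 𝕜, C = μ • vecMulVec v (star v) :=
  ⟨_, hC.isHermitian.eq_smul_vecMulVec fun _ => hC.mulVec_eq_zero_of_le_vecMulVec hD⟩

end Matrix

open scoped Kronecker

@[simp]
lemma adL_apply {n : ℕ} (v x : Mat n) : adL v x = v * x * star v := rfl

lemma adL_one (n : ℕ) : adL (1 : Mat n) = LinearMap.id := by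
  ext1 x; simp

lemma adL_mul {n : ℕ} (v w : Mat n) : adL (v * w) = (adL v).comp (adL w) := by
  ext1 x; simp [star_mul, Matrix.mul_assoc]

lemma adL_smul {n : ℕ} (t : ℂ) (v : Mat n) : adL (t • v) = (t * star t) • adL v := by
  ext1 x; simp [star_smul, smul_smul, mul_comm]

lemma eq_adL_star_of_adL_comp_eq_id {n : ℕ} {V : Mat n} {Φ : Mat n →ₗ[ℂ] Mat n}
    (hV : star V * V = 1) (h : (adL V).comp Φ = LinearMap.id) : Φ = adL (star V) :=
  calc Φ = (adL (star V)).comp ((adL V).comp Φ) := by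
        rw [← LinearMap.comp_assoc, ← adL_mul, hV, adL_one, LinearMap.id_comp]
    _ = adL (star V) := by rw [h, LinearMap.comp_id]

-- the unnormalised maximally entangled vector `∑ᵢ eᵢ ⊗ eᵢ`
def maxEntangledVec (n : ℕ) : Fin n × Fin n → ℂ := fun p => if p.1 = p.2 then 1 else 0

lemma vecMulVec_maxEntangledVec_apply {n : ℕ} (i j k l : Fin n) :
    vecMulVec (maxEntangledVec n) (star (maxEntangledVec n)) (i, k) (j, l) =
      single k l (1 : ℂ) i j := by
  by_cases hik : i = k <;> by_cases hjl : j = l <;>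
    simp [vecMulVec_apply, maxEntangledVec, hik, hjl, eq_comm]

noncomputable def choi (n : ℕ) :
    (Mat n →ₗ[ℂ] Mat n) →ₗ[ℂ] Matrix (Fin n × Fin n) (Fin n × Fin n) ℂ where
  toFun Φ := of fun p q => Φ (single p.2 q.2 1) p.1 q.1
  map_add' Φ Ψ := by ext; simp
  map_smul' c Φ := by ext; simp

lemma choi_injective (n : ℕ) : Function.Injective (choi n) := by
  intro Φ Ψ h
  refine ext_linearMap (h := fun k l => LinearMap.ext_ring (ext fun i j => ?_))
  simpa [choi] using congr_fun₂ h (i, k) (j, l)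

lemma choi_id (n : ℕ) :
    choi n LinearMap.id = vecMulVec (maxEntangledVec n) (star (maxEntangledVec n)) := by
  ext ⟨i, k⟩ ⟨j, l⟩
  simp [choi, vecMulVec_maxEntangledVec_apply]

lemma IsCompletelyPositive.posSemidef_choi {n : ℕ} {Φ : Mat n →ₗ[ℂ] Mat n}
    (hΦ : IsCompletelyPositive n Φ) : (choi n Φ).PosSemidef := by
  have hblock : ∀ k l : Fin n, (of fun i j =>
      vecMulVec (maxEntangledVec n) (star (maxEntangledVec n)) (i, k) (j, l)) = single k l 1 :=
    fun k l => ext fun i j => vecMulVec_maxEntangledVec_apply i j k l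
  have h := hΦ n _ (posSemidef_vecMulVec_self_star (maxEntangledVec n))
  simp only [hblock] at h
  exact h

lemma choi_adL_comp {n : ℕ} (c : Mat n) (Φ : Mat n →ₗ[ℂ] Mat n) :
    choi n ((adL c).comp Φ) = (c ⊗ₖ 1) * choi n Φ * (c ⊗ₖ 1)ᴴ := by
  ext ⟨i, k⟩ ⟨j, l⟩
  simp [choi, adL, mul_apply, Fintype.sum_prod_type, one_apply, apply_ite (starRingEnd ℂ), mul_ite]

lemma posSemidef_choi_adL_comp {n : ℕ} {Φ : Mat n →ₗ[ℂ] Mat n} (hΦ : (choi n Φ).PosSemidef)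
    (c : Mat n) : (choi n ((adL c).comp Φ)).PosSemidef := by
  rw [choi_adL_comp]
  exact hΦ.mul_mul_conjTranspose_same _

lemma exists_eq_smul_id_of_add_eq_id {n : ℕ} {Φ Ψ : Mat n →ₗ[ℂ] Mat n}
    (hΦ : (choi n Φ).PosSemidef) (hΨ : (choi n Ψ).PosSemidef) (h : Φ + Ψ = LinearMap.id) :
    ∃ μ : ℂ, Φ = μ • LinearMap.id := by
  have hΨ' : choi n Ψ =
      vecMulVec (maxEntangledVec n) (star (maxEntangledVec n)) - choi n Φ := by
    rw [← choi_id, ← h, map_add, add_sub_cancel_left]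
  obtain ⟨μ, hμ⟩ := hΦ.exists_eq_smul_vecMulVec_of_le (hΨ' ▸ hΨ)
  exact ⟨μ, choi_injective n (by rw [hμ, map_smul, choi_id])⟩

lemma exists_pos_real_of_mul_star_eq_smul_one {N : Type*} [Fintype N] [DecidableEq N]
    {c : Matrix N N ℂ} {z : ℂ} (hc : c ≠ 0) (h : c * star c = z • 1) :
    ∃ r : ℝ, 0 < r ∧ (r : ℂ) = z := by
  obtain ⟨i, -⟩ : ∃ i j, c i j ≠ 0 := by
    by_contra! h0
    exact hc (ext h0)
  have hz0 : 0 ≤ z := by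
    simpa [← star_eq_conjTranspose, h] using
      (posSemidef_self_mul_conjTranspose c).diag_nonneg (i := i)
  have hz : z ≠ 0 := by
    rintro rfl
    exact hc (self_mul_conjTranspose_eq_zero.mp (by rwa [zero_smul] at h))
  simpa using RCLike.pos_iff_exists_ofReal.mp (lt_of_le_of_ne hz0 (Ne.symm hz))

lemma ofReal_sqrt_mul_star {r : ℝ} (hr : 0 ≤ r) : ((√r : ℝ) : ℂ) * star ((√r : ℝ) : ℂ) = r := by
  rw [Complex.star_def, Complex.conj_ofReal, ← Complex.ofReal_mul, Real.mul_self_sqrt hr]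

lemma exists_unitary_eq_sqrt_smul {N : Type*} [Fintype N] [DecidableEq N]
    {c : Matrix N N ℂ} {r : ℝ} (hr : 0 < r) (h : c * star c = (r : ℂ) • 1) :
    ∃ w : Matrix N N ℂ, w * star w = 1 ∧ star w * w = 1 ∧ c = ((√r : ℝ) : ℂ) • w := by
  have hs : ((√r : ℝ) : ℂ) ≠ 0 := by exact_mod_cast (Real.sqrt_pos.mpr hr).ne'
  have hw : ((√r : ℝ) : ℂ)⁻¹ • c * star (((√r : ℝ) : ℂ)⁻¹ • c) = 1 := by
    rw [star_smul, smul_mul_smul_comm, h, smul_smul, star_inv₀, ← mul_inv,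
      ofReal_sqrt_mul_star hr.le, inv_mul_cancel₀ (by exact_mod_cast hr.ne'), one_smul]
  exact ⟨_, hw, mul_eq_one_comm.mp hw, by rw [smul_smul, mul_inv_cancel₀ hs, one_smul]⟩

lemma mul_star_eq_smul_one_of_adL_comp_eq_smul_id {n : ℕ} {u c : Mat n}
    {Φ : Mat n →ₗ[ℂ] Mat n} {z : ℂ} (hu : u * star u = 1) (hΦ1 : Φ 1 = 1)
    (h : (adL (star u * c)).comp Φ = z • LinearMap.id) : c * star c = z • 1 :=
  calc c * star c = adL u ((adL (star u * c)).comp Φ 1) := by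
        rw [LinearMap.comp_apply, ← LinearMap.comp_apply (adL u), ← adL_mul, ← Matrix.mul_assoc,
          hu, Matrix.one_mul, hΦ1, adL_apply, Matrix.mul_one]
    _ = z • 1 := by simp [h, hu]

lemma exists_unitary_of_adL_comp_eq_smul_id {n : ℕ} {u c : Mat n} {Φ : Mat n →ₗ[ℂ] Mat n}
    {z : ℂ} (hu : u * star u = 1) (hc : c ≠ 0) (hΦ1 : Φ 1 = 1)
    (h : (adL (star u * c)).comp Φ = z • LinearMap.id) :
    ∃ (r : ℝ) (w : Mat n), 0 < r ∧ (r : ℂ) = z ∧ w * star w = 1 ∧ star w * w = 1 ∧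
      c = ((√r : ℝ) : ℂ) • w ∧ Φ = adL (star w * u) := by
  have hcc := mul_star_eq_smul_one_of_adL_comp_eq_smul_id hu hΦ1 h
  obtain ⟨r, hr, rfl⟩ := exists_pos_real_of_mul_star_eq_smul_one hc hcc
  obtain ⟨w, hw, hw', rfl⟩ := exists_unitary_eq_sqrt_smul hr hcc
  refine ⟨r, w, hr, rfl, hw, hw', rfl, ?_⟩
  have hV : star (star u * w) * (star u * w) = 1 := by
    rw [star_mul, star_star, Matrix.mul_assoc, ← Matrix.mul_assoc u, hu, Matrix.one_mul, hw']
  rw [mul_smul_comm, adL_smul, ofReal_sqrt_mul_star hr.le, LinearMap.smul_comp] at h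
  have h' := smul_right_injective _ (by exact_mod_cast hr.ne' : (r : ℂ) ≠ 0) h
  simpa [star_mul] using eq_adL_star_of_adL_comp_eq_id hV h'

theorem automorphism_decomposition_general {n : ℕ} (u a b : Mat n)
    (hu : u * star u = 1) (hu' : star u * u = 1)
    (ha0 : a ≠ 0) (hb0 : b ≠ 0)
    (Φ Ψ : Mat n →ₗ[ℂ] Mat n) (hΦ : IsUCP n Φ) (hΨ : IsUCP n Ψ)
    (h : ∀ x : Mat n, a * Φ x * star a + b * Ψ x * star b = u * x * star u) :
    ∃ (ua ub : Mat n) (l : ℝ), l ∈ Set.Ioo (0 : ℝ) 1 ∧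
      ua * star ua = 1 ∧ star ua * ua = 1 ∧ ub * star ub = 1 ∧ star ub * ub = 1 ∧
      a = ((Real.sqrt l : ℝ) : ℂ) • ua ∧ b = ((Real.sqrt (1 - l) : ℝ) : ℂ) • ub ∧
      (∀ x : Mat n, Φ x = (star ua * u) * x * star (star ua * u)) ∧
      (∀ x : Mat n, Ψ x = (star ub * u) * x * star (star ub * u)) := by
  obtain ⟨hΦ1, hΦcp⟩ := hΦ
  obtain ⟨hΨ1, hΨcp⟩ := hΨ
  have hsum : (adL (star u * a)).comp Φ + (adL (star u * b)).comp Ψ = LinearMap.id := by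
    have h' : (adL a).comp Φ + (adL b).comp Ψ = adL u := LinearMap.ext h
    rw [adL_mul, adL_mul, LinearMap.comp_assoc, LinearMap.comp_assoc, ← LinearMap.comp_add, h',
      ← adL_mul, hu', adL_one]
  obtain ⟨μ, hμ⟩ := exists_eq_smul_id_of_add_eq_id
    (posSemidef_choi_adL_comp hΦcp.posSemidef_choi _)
    (posSemidef_choi_adL_comp hΨcp.posSemidef_choi _) hsum
  have hν : (adL (star u * b)).comp Ψ = (1 - μ) • LinearMap.id := by
    rw [eq_sub_of_add_eq' hsum, hμ]
    module
  obtain ⟨l, ua, hl, rfl, hua, hua', rfl, rfl⟩ :=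
    exists_unitary_of_adL_comp_eq_smul_id hu ha0 hΦ1 hμ
  obtain ⟨l', ub, hl', hl'_eq, hub, hub', rfl, rfl⟩ :=
    exists_unitary_of_adL_comp_eq_smul_id hu hb0 hΨ1 hν
  obtain rfl : l' = 1 - l := by exact_mod_cast hl'_eq
  exact ⟨ua, ub, l, ⟨hl, by linarith⟩, hua, hua', hub, hub', rfl, rfl, fun _ => rfl, fun _ => rfl⟩

theorem automorphism_decomposition {n : ℕ} (u a b : Mat n)
    (hu : u * star u = 1) (hu' : star u * u = 1)
    (ha0 : a ≠ 0) (hb0 : b ≠ 0) (hab : a * star a + b * star b = 1)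
    (Φ Ψ : Mat n →ₗ[ℂ] Mat n) (hΦ : IsUCP n Φ) (hΨ : IsUCP n Ψ)
    (h : ∀ x : Mat n, a * Φ x * star a + b * Ψ x * star b = u * x * star u) :
    ∃ (ua ub : Mat n) (l : ℝ), l ∈ Set.Ioo (0 : ℝ) 1 ∧
      ua * star ua = 1 ∧ star ua * ua = 1 ∧ ub * star ub = 1 ∧ star ub * ub = 1 ∧
      a = ((Real.sqrt l : ℝ) : ℂ) • ua ∧ b = ((Real.sqrt (1 - l) : ℝ) : ℂ) • ub ∧
      (∀ x : Mat n, Φ x = (star ua * u) * x * star (star ua * u)) ∧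
      (∀ x : Mat n, Ψ x = (star ub * u) * x * star (star ub * u)) :=
  automorphism_decomposition_general u a b hu hu' ha0 hb0 Φ Ψ hΦ hΨ h
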